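/- arXiv:2202.05841 — 3 statements merged into one kernel-verified Lean document; each statement's English description precedes it below -/
import Mathlib

section
/- Let f : [0, ∞) → ℝ be continuous, α > 0, and suppose that for every t > 0 there exists an upper-differential p_t of f at t (i.e., limsup_{s→t} (f(s) - f(t) - p_t(s-t))/|s-t| ≤ 0) with p_t ≤ -α f(t), and f ≥ 0. Then f(t) ≤ f(0) · exp(-α t) for all t ≥ 0. -/
open Filter Set Topology

/-!
The function `g t = exp (α t) * f t` has upper right Dini derivative at most
`exp (α t) * (p_t + α f t) ≤ 0` at every `t > 0`, so by the fencing inequality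
`image_le_of_liminf_slope_right_le_deriv_boundary` it is nonincreasing on every `[c, t]` with
`c > 0`; continuity at `0` gives `g t ≤ g 0 = f 0`.
-/

theorem slope_mul {k : Type*} [Field k] (f g : k → k) (a b : k) :
    slope (fun x => f x * g x) a b = f b * slope g a b + g a * slope f a b := by
  simp only [slope_def_field]
  ring

/-- `limsup_{z → x⁺} slope f x z ≤ p`, phrased without `limsup` to avoid boundedness side
conditions. -/
def UpperRightDiniLE (f : ℝ → ℝ) (x p : ℝ) : Prop :=
  ∀ r > p, ∀ᶠ z in 𝓝[>] x, slope f x z < r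

theorem upperRightDiniLE_of_sub_le {f : ℝ → ℝ} {x p : ℝ}
    (h : ∀ ε > 0, ∀ᶠ z in 𝓝[>] x, f z - f x - p * (z - x) ≤ ε * |z - x|) :
    UpperRightDiniLE f x p := by
  intro r hr
  filter_upwards [h ((r - p) / 2) (by linarith), self_mem_nhdsWithin] with z hz hxz
  have hxz : 0 < z - x := sub_pos.2 hxz
  rw [abs_of_pos hxz] at hz
  rw [slope_def_field, div_lt_iff₀ hxz]
  nlinarith

namespace UpperRightDiniLE

variable {f g : ℝ → ℝ} {x p : ℝ}

theorem mono (hf : UpperRightDiniLE f x p) {q : ℝ} (hpq : p ≤ q) : UpperRightDiniLE f x q :=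
  fun r hr => hf r (hpq.trans_lt hr)

theorem mul_hasDerivAt (hf : UpperRightDiniLE f x p) {g' : ℝ} (hg : HasDerivAt g g' x)
    (hgx : 0 < g x) : UpperRightDiniLE (fun y => g y * f y) x (g x * p + f x * g') := by
  intro r hr
  obtain ⟨q, hpq, hq⟩ : ∃ q, p < q ∧ q < (r - f x * g') / g x :=
    exists_between (by rw [lt_div_iff₀ hgx]; linarith)
  have hlt : g x * q + f x * g' < r := by rw [lt_div_iff₀ hgx] at hq; linarith
  have hg_tendsto : Tendsto g (𝓝[>] x) (𝓝 (g x)) :=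
    hg.continuousAt.tendsto.mono_left nhdsWithin_le_nhds
  have hlim : Tendsto (fun z => g z * q + f x * slope g x z) (𝓝[>] x)
      (𝓝 (g x * q + f x * g')) :=
    (hg_tendsto.mul_const q).add ((hg.tendsto_slope.mono_left (nhdsGT_le_nhdsNE x)).const_mul _)
  filter_upwards [hf q hpq, hlim.eventually (gt_mem_nhds hlt),
    hg_tendsto.eventually (lt_mem_nhds hgx)] with z hfz hz hgz
  calc slope (fun y => g y * f y) x z = g z * slope f x z + f x * slope g x z := slope_mul g f x z
    _ < g z * q + f x * slope g x z := by gcongr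
    _ < r := hz

end UpperRightDiniLE

theorem le_of_upperRightDiniLE_zero {g : ℝ → ℝ} {a b : ℝ} (hab : a ≤ b)
    (hg : ContinuousOn g (Icc a b)) (hdini : ∀ x ∈ Ioo a b, UpperRightDiniLE g x 0) :
    g b ≤ g a := by
  rcases hab.eq_or_lt with rfl | hab
  · rfl
  have hle : ∀ c ∈ Ioo a b, g b ≤ g c := fun c hc =>
    image_le_of_liminf_slope_right_le_deriv_boundary (hg.mono (Icc_subset_Icc_left hc.1.le))
      (B := fun _ => g c) le_rfl continuousOn_const (fun _ _ => hasDerivWithinAt_const _ _ _)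
      (fun x hx r hr => (hdini x ⟨hc.1.trans_le hx.1, hx.2⟩ r hr).frequently)
      ⟨hc.2.le, le_rfl⟩
  have hcont : Tendsto g (𝓝[>] a) (𝓝 (g a)) :=
    ((hg a (left_mem_Icc.2 hab.le)).mono_of_mem_nhdsWithin (Icc_mem_nhdsGT hab)).tendsto
  exact ge_of_tendsto hcont (eventually_of_mem (Ioo_mem_nhdsGT hab) hle)

theorem gronwall_upper_differential_general (f : ℝ → ℝ) (α : ℝ)
    (hcont : ContinuousOn f (Ici 0))
    (hdiff : ∀ t > (0 : ℝ), ∃ p : ℝ, p ≤ -α * f t ∧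
      ∀ ε > (0 : ℝ), ∀ᶠ s in nhdsWithin t (Ici 0 \ {t}),
        f s - f t - p * (s - t) ≤ ε * |s - t|) :
    ∀ t ≥ (0 : ℝ), f t ≤ f 0 * Real.exp (-α * t) := by
  intro t ht
  have hexp (x : ℝ) : HasDerivAt (fun y => Real.exp (α * y)) (Real.exp (α * x) * α) x := by
    simpa using ((hasDerivAt_id x).const_mul α).exp
  have hdini : ∀ x ∈ Ioo 0 t, UpperRightDiniLE (fun y => Real.exp (α * y) * f y) x 0 := by
    rintro x ⟨hx, -⟩
    obtain ⟨p, hp, hup⟩ := hdiff x hx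
    have hsub : Ioi x ⊆ Ici 0 \ {x} := fun z hz => ⟨hx.le.trans hz.le, hz.ne'⟩
    have hf_dini : UpperRightDiniLE f x p :=
      upperRightDiniLE_of_sub_le fun ε hε => nhdsWithin_mono x hsub (hup ε hε)
    refine (hf_dini.mul_hasDerivAt (hexp x) (Real.exp_pos _)).mono ?_
    nlinarith [Real.exp_pos (α * x)]
  have hcont_t : ContinuousOn f (Icc 0 t) := hcont.mono Icc_subset_Ici_self
  have hmono : Real.exp (α * t) * f t ≤ f 0 := by
    simpa using le_of_upperRightDiniLE_zero ht (by fun_prop) hdini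
  calc f t = Real.exp (-α * t) * (Real.exp (α * t) * f t) := by
        rw [← mul_assoc, ← Real.exp_add]; simp
    _ ≤ Real.exp (-α * t) * f 0 := by gcongr
    _ = f 0 * Real.exp (-α * t) := mul_comm _ _

/-- Grönwall-type lemma via upper-differentials: if `f : [0, ∞) → ℝ` is continuous,
nonnegative, and at every `t > 0` admits an upper-differential `p ≤ -α f t`
(where `p` is an upper-differential of `f` at `t` if
`limsup_{s → t} (f s - f t - p (s - t)) / |s - t| ≤ 0`, unfolded below),
then `f t ≤ f 0 * exp (-α t)` for all `t ≥ 0`. -/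
theorem gronwall_upper_differential (f : ℝ → ℝ) (α : ℝ) (hα : 0 < α)
    (hcont : ContinuousOn f (Ici 0)) (hnonneg : ∀ t ∈ Ici (0 : ℝ), 0 ≤ f t)
    (hdiff : ∀ t > (0 : ℝ), ∃ p : ℝ, p ≤ -α * f t ∧
      ∀ ε > (0 : ℝ), ∀ᶠ s in nhdsWithin t (Ici 0 \ {t}),
        f s - f t - p * (s - t) ≤ ε * |s - t|) :
    ∀ t ≥ (0 : ℝ), f t ≤ f 0 * Real.exp (-α * t) :=
  gronwall_upper_differential_general f α hcont hdiff
end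

section
/- Let μ be a Borel probability measure on a metric space (X, d) with ∫ d(x, x₀)^p μ(dx) < ∞ for some p ≥ 1 and x₀ ∈ X. Then there is a constant L > 0 such that for all Borel measurable f, g : X → ℝ with f, g ≥ 0, ∫ f dμ = ∫ g dμ = 1, and f, g essentially bounded, the Wasserstein-p distance satisfies W_p(f·μ, g·μ) ≤ L · ‖f - g‖_{L^∞(μ)}^{1/p}. -/
open MeasureTheory
open scoped ENNReal

/-- The Wasserstein distance of order `p` between two measures on a metric space,
defined via couplings: `W_p(ν₁, ν₂) = inf_π (∫ d(x,y)^p dπ)^{1/p}` where the infimum runs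
over all couplings `π` of `ν₁` and `ν₂`. -/
noncomputable def wassersteinDist {X : Type*} [MetricSpace X] [MeasurableSpace X]
    (p : ℝ) (ν₁ ν₂ : Measure X) : ℝ≥0∞ :=
  ⨅ (π : Measure (X × X)) (_ : π.map Prod.fst = ν₁) (_ : π.map Prod.snd = ν₂),
    (∫⁻ z, ENNReal.ofReal (dist z.1 z.2 ^ p) ∂π) ^ (1 / p)

/-!
Write `f = min f g + (f - g)⁺` and `g = min f g + (g - f)⁺` (`ENNReal.ofReal` takes the positive
part); the remainders have equal mass since `∫ f = ∫ g`. Leave the common part `min f g · μ` on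
the diagonal, at no cost, and couple the remainders independently (normalised product). Since
`d(x,y)^p ≤ 2^(p-1) (d(x,x₀)^p + d(y,x₀)^p)`, this costs at most `2^(p-1)` times the sum of the
`p`-th moments of the remainders about `x₀`, and as each remainder density is at most
`‖f - g‖_∞`, each of these moments is at most `‖f - g‖_∞ ∫ d(x,x₀)^p dμ`.
-/

open Set

section Coupling

variable {X : Type*} [MeasurableSpace X]

noncomputable def prodCoupling (α β : Measure X) : Measure (X × X) :=
  (α univ)⁻¹ • α.prod β

variable {α β : Measure X} [IsFiniteMeasure α] [IsFiniteMeasure β]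

lemma map_fst_prodCoupling (hαβ : α univ = β univ) : (prodCoupling α β).map Prod.fst = α := by
  rcases eq_zero_or_neZero α with rfl | _
  · simp [prodCoupling]
  rw [prodCoupling, Measure.map_smul, Measure.map_fst_prod, smul_smul, ← hαβ,
    ENNReal.inv_mul_cancel (NeZero.ne _) (measure_ne_top _ _), one_smul]

lemma map_snd_prodCoupling (hαβ : α univ = β univ) : (prodCoupling α β).map Prod.snd = β := by
  rcases eq_zero_or_neZero α with rfl | _
  · simp [prodCoupling, Measure.measure_univ_eq_zero.mp hαβ.symm]
  rw [prodCoupling, Measure.map_smul, Measure.map_snd_prod, smul_smul,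
    ENNReal.inv_mul_cancel (NeZero.ne _) (measure_ne_top _ _), one_smul]

end Coupling

lemma lintegral_comp_fst_add_comp_snd {X : Type*} [MeasurableSpace X] {π : Measure (X × X)}
    {α β : Measure X} (hα : π.map Prod.fst = α) (hβ : π.map Prod.snd = β) {A : X → ℝ≥0∞}
    (hA : Measurable A) :
    ∫⁻ z, (A z.1 + A z.2) ∂π = ∫⁻ x, A x ∂α + ∫⁻ x, A x ∂β := by
  rw [lintegral_add_left (f := fun z : X × X => A z.1) (hA.comp measurable_fst), ← hα, ← hβ,
    lintegral_map hA measurable_fst, lintegral_map hA measurable_snd]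

lemma ofReal_dist_rpow_eq_edist_rpow {X : Type*} [PseudoMetricSpace X] {p : ℝ} (hp : 0 ≤ p)
    (x y : X) : ENNReal.ofReal (dist x y ^ p) = edist x y ^ p := by
  rw [edist_dist, ENNReal.ofReal_rpow_of_nonneg dist_nonneg hp]

lemma ofReal_dist_rpow_le {X : Type*} [PseudoMetricSpace X] {p : ℝ} (hp : 1 ≤ p) (x y z : X) :
    ENNReal.ofReal (dist x y ^ p) ≤
      2 ^ (p - 1) * (ENNReal.ofReal (dist x z ^ p) + ENNReal.ofReal (dist y z ^ p)) := by
  simp only [ofReal_dist_rpow_eq_edist_rpow (zero_le_one.trans hp)]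
  calc edist x y ^ p ≤ (edist x z + edist y z) ^ p := by
        gcongr; exact edist_triangle_right x y z
    _ ≤ 2 ^ (p - 1) * (edist x z ^ p + edist y z ^ p) :=
        ENNReal.rpow_add_le_mul_rpow_add_rpow _ _ hp

section Wasserstein

variable {X : Type*} [MetricSpace X] [MeasurableSpace X]

lemma wassersteinDist_le_of_map {p : ℝ} {ν₁ ν₂ : Measure X} {π : Measure (X × X)}
    (h₁ : π.map Prod.fst = ν₁) (h₂ : π.map Prod.snd = ν₂) :
    wassersteinDist p ν₁ ν₂ ≤ (∫⁻ z, ENNReal.ofReal (dist z.1 z.2 ^ p) ∂π) ^ (1 / p) :=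
  iInf_le_of_le π <| iInf_le_of_le h₁ <| iInf_le _ h₂

lemma lintegral_ofReal_dist_rpow_map_diag {p : ℝ} (hp : 0 < p) (ν : Measure X) :
    ∫⁻ z, ENNReal.ofReal (dist z.1 z.2 ^ p) ∂(ν.map fun x => (x, x)) = 0 :=
  nonpos_iff_eq_zero.mp <| (lintegral_map_le _ _).trans_eq <| by
    simp [Real.zero_rpow hp.ne']

theorem wassersteinDist_add_add_le [OpensMeasurableSpace X] {p : ℝ} (hp : 1 ≤ p) (x₀ : X)
    (ν : Measure X) {α β : Measure X} [IsFiniteMeasure α] [IsFiniteMeasure β]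
    (hαβ : α univ = β univ) :
    wassersteinDist p (ν + α) (ν + β) ≤
      (2 ^ (p - 1) * (∫⁻ x, ENNReal.ofReal (dist x x₀ ^ p) ∂α +
        ∫⁻ x, ENNReal.ofReal (dist x x₀ ^ p) ∂β)) ^ (1 / p) := by
  have hdiag : Measurable fun x : X => (x, x) := measurable_id.prodMk measurable_id
  have hA : Measurable fun x => ENNReal.ofReal (dist x x₀ ^ p) := by fun_prop
  refine (wassersteinDist_le_of_map
    (π := ν.map (fun x => (x, x)) + prodCoupling α β) ?_ ?_).trans ?_
  · rw [Measure.map_add _ _ measurable_fst, Measure.map_map measurable_fst hdiag,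
      map_fst_prodCoupling hαβ]
    exact congrArg (· + α) Measure.map_id
  · rw [Measure.map_add _ _ measurable_snd, Measure.map_map measurable_snd hdiag,
      map_snd_prodCoupling hαβ]
    exact congrArg (· + β) Measure.map_id
  gcongr
  rw [lintegral_add_measure, lintegral_ofReal_dist_rpow_map_diag (by linarith), zero_add,
    ← lintegral_comp_fst_add_comp_snd (map_fst_prodCoupling hαβ) (map_snd_prodCoupling hαβ) hA,
    ← lintegral_const_mul _ (by fun_prop)]
  exact lintegral_mono fun z => ofReal_dist_rpow_le hp z.1 z.2 x₀

end Wasserstein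

lemma ENNReal.ofReal_min_add_ofReal_sub {a b : ℝ} (hb : 0 ≤ b) :
    ENNReal.ofReal (min a b) + ENNReal.ofReal (a - b) = ENNReal.ofReal a := by
  rcases le_total a b with h | h
  · simp [min_eq_left h, sub_nonpos.2 h]
  · rw [min_eq_right h, ← ENNReal.ofReal_add hb (sub_nonneg.2 h), add_sub_cancel]

section Density

variable {X : Type*} [MeasurableSpace X] (μ : Measure X)

lemma withDensity_ofReal_eq_min_add_sub {f g : X → ℝ} (hf : Measurable f) (hg : Measurable g)
    (hg0 : ∀ x, 0 ≤ g x) :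
    μ.withDensity (fun x => ENNReal.ofReal (f x)) =
      μ.withDensity (fun x => ENNReal.ofReal (min (f x) (g x))) +
        μ.withDensity (fun x => ENNReal.ofReal (f x - g x)) := by
  rw [← withDensity_add_left (hf.min hg).ennreal_ofReal]
  exact congrArg _ (funext fun x => (ENNReal.ofReal_min_add_ofReal_sub (hg0 x)).symm)

lemma lintegral_ofReal_sub_eq_of_integral_eq {f g : X → ℝ} (hf : Integrable f μ)
    (hg : Integrable g μ) (hfg : ∫ x, f x ∂μ = ∫ x, g x ∂μ) :
    ∫⁻ x, ENNReal.ofReal (f x - g x) ∂μ = ∫⁻ x, ENNReal.ofReal (g x - f x) ∂μ := by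
  have h := integral_eq_lintegral_pos_part_sub_lintegral_neg_part (hf.sub hg)
  simp only [Pi.sub_apply, neg_sub, integral_sub hf hg, hfg, sub_self] at h
  exact (ENNReal.toReal_eq_toReal_iff' (hf.sub hg).lintegral_lt_top.ne
    (hg.sub hf).lintegral_lt_top.ne).mp (sub_eq_zero.mp h.symm)

lemma ae_ofReal_le_eLpNorm_top (u : X → ℝ) : ∀ᵐ x ∂μ, ENNReal.ofReal (u x) ≤ eLpNorm u ⊤ μ := by
  filter_upwards [enorm_ae_le_eLpNormEssSup u μ] with x hx
  exact (Real.ofReal_le_enorm _).trans (eLpNorm_exponent_top (f := u) ▸ hx)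

lemma lintegral_withDensity_le_of_ae_le {F A : X → ℝ≥0∞} {c : ℝ≥0∞} (hF : Measurable F)
    (hA : Measurable A) (hFc : ∀ᵐ x ∂μ, F x ≤ c) :
    ∫⁻ x, A x ∂μ.withDensity F ≤ c * ∫⁻ x, A x ∂μ := by
  rw [← lintegral_const_mul c hA]
  refine (lintegral_withDensity_le_lintegral_mul μ hF A).trans (lintegral_mono_ae ?_)
  filter_upwards [hFc] with x hx
  exact mul_le_mul_left hx _

end Density

theorem wasserstein_le_Linfty_pow_general {X : Type*} [MetricSpace X] [MeasurableSpace X] [BorelSpace X]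
    (μ : Measure X) (p : ℝ) (hp : 1 ≤ p) (x₀ : X)
    (hmoment : ∫⁻ x, ENNReal.ofReal (dist x x₀ ^ p) ∂μ < ⊤) :
    ∃ L > (0 : ℝ), ∀ f g : X → ℝ, Measurable f → Measurable g →
      (∀ x, 0 ≤ f x) → (∀ x, 0 ≤ g x) →
      (∫ x, f x ∂μ) = 1 → (∫ x, g x ∂μ) = 1 →
      eLpNorm f ⊤ μ < ⊤ → eLpNorm g ⊤ μ < ⊤ →
      wassersteinDist p (μ.withDensity fun x => ENNReal.ofReal (f x))
          (μ.withDensity fun x => ENNReal.ofReal (g x))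
        ≤ ENNReal.ofReal L * eLpNorm (f - g) ⊤ μ ^ (1 / p) := by
  set M := ∫⁻ x, ENNReal.ofReal (dist x x₀ ^ p) ∂μ
  set C : ℝ≥0∞ := (2 ^ (p - 1) * (2 * M)) ^ (1 / p)
  have hC : C ≠ ⊤ := ENNReal.rpow_ne_top_of_nonneg (by positivity) (by finiteness)
  refine ⟨C.toReal + 1, by positivity, fun f g hf hg hf0 hg0 hf1 hg1 _ _ => ?_⟩
  set ε := eLpNorm (f - g) ⊤ μ
  have hfi : Integrable f μ := .of_integral_ne_zero (by simp [hf1])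
  have hgi : Integrable g μ := .of_integral_ne_zero (by simp [hg1])
  have : IsFiniteMeasure (μ.withDensity fun x => ENNReal.ofReal (f x - g x)) :=
    isFiniteMeasure_withDensity_ofReal (hfi.sub hgi).hasFiniteIntegral
  have : IsFiniteMeasure (μ.withDensity fun x => ENNReal.ofReal (g x - f x)) :=
    isFiniteMeasure_withDensity_ofReal (hgi.sub hfi).hasFiniteIntegral
  have hmass : (μ.withDensity fun x => ENNReal.ofReal (f x - g x)) univ =
      (μ.withDensity fun x => ENNReal.ofReal (g x - f x)) univ := by
    simpa using lintegral_ofReal_sub_eq_of_integral_eq μ hfi hgi (hf1.trans hg1.symm)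
  have hA : Measurable fun x => ENNReal.ofReal (dist x x₀ ^ p) := by fun_prop
  have hF := lintegral_withDensity_le_of_ae_le μ (hf.sub hg).ennreal_ofReal hA
    (ae_ofReal_le_eLpNorm_top μ (f - g))
  have hG := lintegral_withDensity_le_of_ae_le μ (hg.sub hf).ennreal_ofReal hA
    (eLpNorm_sub_comm g f ⊤ μ ▸ ae_ofReal_le_eLpNorm_top μ (g - f))
  rw [withDensity_ofReal_eq_min_add_sub μ hf hg hg0,
    withDensity_ofReal_eq_min_add_sub μ hg hf hf0]
  simp only [min_comm (g _)]
  calc _ ≤ _ := wassersteinDist_add_add_le hp x₀ _ hmass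
    _ ≤ (2 ^ (p - 1) * (2 * M) * ε) ^ (1 / p) := by
        gcongr ?_ ^ _
        exact (mul_le_mul_right (add_le_add hF hG) _).trans_eq (by ring)
    _ = C * ε ^ (1 / p) := ENNReal.mul_rpow_of_nonneg _ _ (by positivity)
    _ ≤ ENNReal.ofReal (C.toReal + 1) * ε ^ (1 / p) := by
        gcongr
        exact (ENNReal.le_ofReal_iff_toReal_le hC (by positivity)).mpr (by linarith)

/-- If `μ` has a finite `p`-th moment about some point `x₀`, then on probability densities
(with respect to `μ`) bounded in `L^∞(μ)`, the map `f ↦ f·μ` is `1/p`-Hölder from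
`L^∞(μ)` into Wasserstein-`p` space: `W_p(f·μ, g·μ) ≤ L ‖f - g‖_{L^∞(μ)}^{1/p}`. -/
theorem wasserstein_le_Linfty_pow {X : Type*} [MetricSpace X] [MeasurableSpace X] [BorelSpace X]
    (μ : Measure X) [IsProbabilityMeasure μ] (p : ℝ) (hp : 1 ≤ p) (x₀ : X)
    (hmoment : ∫⁻ x, ENNReal.ofReal (dist x x₀ ^ p) ∂μ < ⊤) :
    ∃ L > (0 : ℝ), ∀ f g : X → ℝ, Measurable f → Measurable g →
      (∀ x, 0 ≤ f x) → (∀ x, 0 ≤ g x) →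
      (∫ x, f x ∂μ) = 1 → (∫ x, g x ∂μ) = 1 →
      eLpNorm f ⊤ μ < ⊤ → eLpNorm g ⊤ μ < ⊤ →
      wassersteinDist p (μ.withDensity fun x => ENNReal.ofReal (f x))
          (μ.withDensity fun x => ENNReal.ofReal (g x))
        ≤ ENNReal.ofReal L * eLpNorm (f - g) ⊤ μ ^ (1 / p) :=
  wasserstein_le_Linfty_pow_general μ p hp x₀ hmoment
end

section
/- Let g(x) = exp(-U(x)) be a probability density on ℝ^d where U is measurable, bounded below on the ball {|x| ≤ R}, and satisfies U(x) ≥ c|x|^p for |x| > R for some constants c > 0, R > 0, p ≥ 1. Then any sequence (m_n) of probability measures on ℝ^d with sup_n H(m_n | g) < ∞ has uniformly bounded p-th moments: sup_n ∫ |x|^p m_n(dx) < ∞. -/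
/-!
Tilting `g` by a bounded function `F` gives a probability measure `g_F ∝ e^F g`, and Gibbs'
inequality `0 ≤ H(m | g_F) = H(m | g) - ∫ F dm + log ∫ e^F dg` is the Donsker–Varadhan bound
`∫ F dm ≤ H(m | g) + log ∫ e^F dg`. Take `F` to be truncations of `(c/2) |x|^p`: the growth of `U`
makes `∫ e^{(c/2)|x|^p} dg = ∫ e^{(c/2)|x|^p - U(x)} dx` finite, so monotone convergence bounds
`∫ (c/2) |x|^p dmₙ` by `B + log ∫ e^{(c/2)|x|^p} dg` for every `n`.
-/

open MeasureTheory Real InformationTheory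
open scoped ENNReal Nat

section DonskerVaradhan

variable {α : Type*} [MeasurableSpace α] {μ ν : Measure α} {f : α → ℝ}

lemma MeasureTheory.Measure.AbsolutelyContinuous.neZero [NeZero μ] (hμν : μ ≪ ν) : NeZero ν :=
  ⟨fun hν ↦ NeZero.ne μ (Measure.absolutelyContinuous_zero_iff.mp (hν ▸ hμν))⟩

theorem integral_le_integral_llr_add_log_integral_exp [IsProbabilityMeasure μ] [SigmaFinite ν]
    (hμν : μ ≪ ν) (h_llr : Integrable (llr μ ν) μ) (hfμ : Integrable f μ)
    (hfν : Integrable (fun x ↦ exp (f x)) ν) :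
    ∫ x, f x ∂μ ≤ ∫ x, llr μ ν x ∂μ + log (∫ x, exp (f x) ∂ν) := by
  have := hμν.neZero
  have := isProbabilityMeasure_tilted hfν
  have hgibbs := integral_llr_add_sub_measure_univ_nonneg
    (hμν.trans (absolutelyContinuous_tilted hfν)) (integrable_llr_tilted_right hμν hfμ h_llr hfν)
  rw [integral_llr_tilted_right hμν hfμ hfν h_llr] at hgibbs
  simp only [probReal_univ, add_sub_cancel_right] at hgibbs
  linarith

theorem lintegral_ofReal_le_integral_llr_add_log_integral_exp [IsProbabilityMeasure μ]
    [SigmaFinite ν] (hμν : μ ≪ ν) (h_llr : Integrable (llr μ ν) μ) (hf : Measurable f)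
    (hf_nonneg : 0 ≤ f) (hfν : Integrable (fun x ↦ exp (f x)) ν) :
    ∫⁻ x, ENNReal.ofReal (f x) ∂μ ≤
      ENNReal.ofReal (∫ x, llr μ ν x ∂μ + log (∫ x, exp (f x) ∂ν)) := by
  have := hμν.neZero
  set F : ℕ → α → ℝ := fun k x ↦ min (f x) k
  have hF_meas (k : ℕ) : Measurable (F k) := hf.min measurable_const
  have hF_nonneg (k : ℕ) (x : α) : 0 ≤ F k x := le_min (hf_nonneg x) k.cast_nonneg
  have hF_integrable (k : ℕ) : Integrable (F k) μ :=
    .of_bound (hF_meas k).aestronglyMeasurable k <| ae_of_all _ fun x ↦ by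
      rw [norm_of_nonneg (hF_nonneg k x)]; exact min_le_right _ _
  have hF_exp_le (k : ℕ) (x : α) : exp (F k x) ≤ exp (f x) := exp_le_exp.2 (min_le_left _ _)
  have hF_exp_integrable (k : ℕ) : Integrable (fun x ↦ exp (F k x)) ν :=
    hfν.mono' (hF_meas k).exp.aestronglyMeasurable <| ae_of_all _ fun x ↦ by
      rw [norm_of_nonneg (exp_pos _).le]; exact hF_exp_le k x
  have hF_bound (k : ℕ) :
      ∫ x, F k x ∂μ ≤ ∫ x, llr μ ν x ∂μ + log (∫ x, exp (f x) ∂ν) := by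
    refine (integral_le_integral_llr_add_log_integral_exp hμν h_llr (hF_integrable k)
      (hF_exp_integrable k)).trans (add_le_add_right (log_le_log ?_ ?_) _)
    · exact integral_exp_pos (hF_exp_integrable k)
    · exact integral_mono (hF_exp_integrable k) hfν (hF_exp_le k)
  have hF_iSup (x : α) : ⨆ k : ℕ, ENNReal.ofReal (F k x) = ENNReal.ofReal (f x) :=
    le_antisymm (iSup_le fun k ↦ ENNReal.ofReal_le_ofReal (min_le_left _ _))
      (le_iSup_of_le ⌈f x⌉₊ (ENNReal.ofReal_le_ofReal (le_min le_rfl (Nat.le_ceil _))))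
  calc ∫⁻ x, ENNReal.ofReal (f x) ∂μ = ∫⁻ x, ⨆ k : ℕ, ENNReal.ofReal (F k x) ∂μ := by
        simp only [hF_iSup]
    _ = ⨆ k : ℕ, ∫⁻ x, ENNReal.ofReal (F k x) ∂μ :=
        lintegral_iSup (fun k ↦ (hF_meas k).ennreal_ofReal) fun k l hkl x ↦
          ENNReal.ofReal_le_ofReal (min_le_min_left _ (Nat.cast_le.2 hkl))
    _ ≤ _ := iSup_le fun k ↦ by
        rw [← ofReal_integral_eq_lintegral_ofReal (hF_integrable k) (ae_of_all _ (hF_nonneg k))]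
        exact ENNReal.ofReal_le_ofReal (hF_bound k)

end DonskerVaradhan

lemma exp_neg_mul_rpow_mul_one_add_pow_le {a p t : ℝ} (ha : 0 < a) (hp : 1 ≤ p) (ht : 0 ≤ t)
    (n : ℕ) : exp (-(a * t ^ p)) * (1 + t) ^ n ≤ n ! / a ^ n * exp (2 * a) := by
  have h_le_rpow : t ≤ 1 + t ^ p := by
    rcases le_or_gt t 1 with h | h
    · linarith [rpow_nonneg ht p]
    · linarith [self_le_rpow_of_one_le h.le hp]
  have h_poly : (1 + t) ^ n ≤ n ! / a ^ n * exp (a * (1 + t)) := by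
    have := pow_div_factorial_le_exp (x := a * (1 + t)) (by positivity) n
    rw [mul_pow, div_le_iff₀ (by positivity)] at this
    rw [div_mul_eq_mul_div, le_div_iff₀ (by positivity)]
    linarith
  calc exp (-(a * t ^ p)) * (1 + t) ^ n
      ≤ exp (-(a * t ^ p)) * (n ! / a ^ n * exp (a * (1 + t))) := by gcongr
    _ = n ! / a ^ n * exp (a * (1 + t) - a * t ^ p) := by rw [sub_eq_add_neg, exp_add]; ring
    _ ≤ n ! / a ^ n * exp (2 * a) := by gcongr; nlinarith

section FiniteDimensional

variable {E : Type*} [NormedAddCommGroup E] [NormedSpace ℝ E] [FiniteDimensional ℝ E]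
  [MeasurableSpace E] [BorelSpace E] (μ : Measure E) [μ.IsAddHaarMeasure]

theorem integrable_exp_neg_mul_norm_rpow {a p : ℝ} (ha : 0 < a) (hp : 1 ≤ p) :
    Integrable (fun x : E ↦ exp (-(a * ‖x‖ ^ p))) μ := by
  set n := Module.finrank ℝ E + 1
  have h_dom := (integrable_one_add_norm (μ := μ) (r := n) (by simp [n])).const_mul
    (n ! / a ^ n * exp (2 * a))
  refine h_dom.mono' (Measurable.aestronglyMeasurable (by fun_prop)) (ae_of_all _ fun x ↦ ?_)
  rw [norm_of_nonneg (exp_pos _).le, rpow_neg (by positivity), rpow_natCast, ← div_eq_mul_inv,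
    le_div_iff₀ (by positivity)]
  exact exp_neg_mul_rpow_mul_one_add_pow_le ha hp (norm_nonneg x) n

theorem integrable_exp_mul_norm_rpow_sub {U : E → ℝ} {a b c p R : ℝ} (hU : Measurable U)
    (ha : 0 ≤ a) (hac : a < c) (hp : 1 ≤ p) (hUbelow : ∀ x, ‖x‖ ≤ R → b ≤ U x)
    (hUgrowth : ∀ x, R < ‖x‖ → c * ‖x‖ ^ p ≤ U x) :
    Integrable (fun x ↦ exp (a * ‖x‖ ^ p - U x)) μ := by
  have h_dom : Integrable (fun x ↦ (Metric.closedBall 0 R).indicator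
      (fun _ ↦ exp (a * R ^ p - b)) x + exp (-((c - a) * ‖x‖ ^ p))) μ :=
    ((integrable_indicator_iff measurableSet_closedBall).2
      (integrableOn_const measure_closedBall_lt_top.ne)).add
      (integrable_exp_neg_mul_norm_rpow μ (sub_pos.2 hac) hp)
  refine h_dom.mono' (Measurable.aestronglyMeasurable (by fun_prop)) (ae_of_all _ fun x ↦ ?_)
  rw [norm_of_nonneg (exp_pos _).le]
  rcases le_or_gt ‖x‖ R with hx | hx
  · rw [Set.indicator_of_mem (mem_closedBall_zero_iff.2 hx)]
    have : a * ‖x‖ ^ p ≤ a * R ^ p := by gcongr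
    linarith [exp_le_exp.2 (show a * ‖x‖ ^ p - U x ≤ a * R ^ p - b by linarith [hUbelow x hx]),
      exp_pos (-((c - a) * ‖x‖ ^ p))]
  · rw [Set.indicator_of_notMem (by simpa using hx), zero_add]
    exact exp_le_exp.2 (by linarith [hUgrowth x hx])

end FiniteDimensional

theorem uniform_moment_bound_of_entropy_bound_general {d : ℕ} (U : (Fin d → ℝ) → ℝ)
    (c R p B b : ℝ) (hc : 0 < c) (hp : 1 ≤ p)
    (hU : Measurable U)
    (hUbelow : ∀ x : Fin d → ℝ, ‖x‖ ≤ R → b ≤ U x)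
    (hUgrowth : ∀ x : Fin d → ℝ, R < ‖x‖ → c * ‖x‖ ^ p ≤ U x)
    (m : ℕ → Measure (Fin d → ℝ)) [∀ n, IsProbabilityMeasure (m n)]
    (habs : ∀ n, m n ≪ volume.withDensity fun x => ENNReal.ofReal (exp (-U x)))
    (hint : ∀ n, Integrable
      (llr (m n) (volume.withDensity fun x => ENNReal.ofReal (exp (-U x)))) (m n))
    (hent : ∀ n, ∫ x, llr (m n) (volume.withDensity fun x => ENNReal.ofReal (exp (-U x))) x
      ∂(m n) ≤ B) :
    ∃ B' : ℝ≥0∞, B' < ⊤ ∧ ∀ n, ∫⁻ x, ENNReal.ofReal (‖x‖ ^ p) ∂(m n) ≤ B' := by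
  set g := volume.withDensity fun x => ENNReal.ofReal (exp (-U x))
  have : SigmaFinite g := SigmaFinite.withDensity_of_ne_top' fun _ ↦ ENNReal.ofReal_ne_top
  have h_exp_moment : Integrable (fun x ↦ exp (c / 2 * ‖x‖ ^ p)) g := by
    rw [integrable_withDensity_iff (by fun_prop) (ae_of_all _ fun _ ↦ ENNReal.ofReal_lt_top)]
    simpa only [ENNReal.toReal_ofReal (exp_pos _).le, ← exp_add, ← sub_eq_add_neg] using
      integrable_exp_mul_norm_rpow_sub volume hU (by positivity) (half_lt_self hc) hp hUbelow
        hUgrowth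
  refine ⟨ENNReal.ofReal (2 / c) * ENNReal.ofReal (B + log (∫ x, exp (c / 2 * ‖x‖ ^ p) ∂g)),
    by finiteness, fun n ↦ ?_⟩
  calc ∫⁻ x, ENNReal.ofReal (‖x‖ ^ p) ∂(m n)
      = ENNReal.ofReal (2 / c) * ∫⁻ x, ENNReal.ofReal (c / 2 * ‖x‖ ^ p) ∂(m n) := by
        rw [← lintegral_const_mul _ (by fun_prop)]
        congr with x
        rw [← ENNReal.ofReal_mul (by positivity)]
        field_simp
    _ ≤ _ := by
        gcongr
        refine (lintegral_ofReal_le_integral_llr_add_log_integral_exp (habs n) (hint n)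
          (by fun_prop) (fun x ↦ by positivity) h_exp_moment).trans ?_
        gcongr
        exact hent n

/-- Uniform moment bound from bounded relative entropy: let `g(x) = exp (-U x)` be a
probability density with `U` bounded below on `{|x| ≤ R}` and `U(x) ≥ c |x|^p` for `|x| > R`.
Then any sequence of probability measures `mₙ` with uniformly bounded relative entropy
`H(mₙ | g) = ∫ log (dmₙ/dg) dmₙ ≤ B` has uniformly bounded `p`-th moments. -/
theorem uniform_moment_bound_of_entropy_bound {d : ℕ} (U : (Fin d → ℝ) → ℝ)
    (c R p B b : ℝ) (hc : 0 < c) (hR : 0 < R) (hp : 1 ≤ p)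
    (hU : Measurable U)
    (hUnorm : ∫ x, exp (-U x) = 1)
    (hUbelow : ∀ x : Fin d → ℝ, ‖x‖ ≤ R → b ≤ U x)
    (hUgrowth : ∀ x : Fin d → ℝ, R < ‖x‖ → c * ‖x‖ ^ p ≤ U x)
    (m : ℕ → Measure (Fin d → ℝ)) [∀ n, IsProbabilityMeasure (m n)]
    (habs : ∀ n, m n ≪ volume.withDensity fun x => ENNReal.ofReal (exp (-U x)))
    (hint : ∀ n, Integrable
      (llr (m n) (volume.withDensity fun x => ENNReal.ofReal (exp (-U x)))) (m n))
    (hent : ∀ n, ∫ x, llr (m n) (volume.withDensity fun x => ENNReal.ofReal (exp (-U x))) x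
      ∂(m n) ≤ B) :
    ∃ B' : ℝ≥0∞, B' < ⊤ ∧ ∀ n, ∫⁻ x, ENNReal.ofReal (‖x‖ ^ p) ∂(m n) ≤ B' :=
  uniform_moment_bound_of_entropy_bound_general U c R p B b hc hp hU hUbelow hUgrowth m habs hint
    hent
end
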